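/- Let n ≥ 3 and 2−n < γ < 0. There exists a constant C > 0 depending only on n and γ such that for every y ∈ ℝⁿ with y ≠ 0, the integral over the Euclidean quarter-space Q of ‖x−y‖^{2−n}·‖x‖^{γ−2} with respect to n-dimensional Lebesgue measure is finite and at most C‖y‖^{γ}. -/

import Mathlib

open MeasureTheory Metric Set

noncomputable section

/-- The Euclidean quarter-space `ℝⁿ_𝕃 = {x : 0 ≤ x₁, 0 ≤ xₙ}`, where `i0` and `iN` are the
indices of the coordinates `x₁` and `xₙ`. -/
def Qset {n : ℕ} (i0 iN : Fin n) : Set (EuclideanSpace ℝ (Fin n)) :=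
  {x | 0 ≤ x i0 ∧ 0 ≤ x iN}

/-!
The kernel `‖x - y‖ ^ p * ‖x‖ ^ q` (here `p = 2 - n`, `q = γ - 2`) is homogeneous of degree
`p + q`, so rescaling by `‖y‖` turns its integral over `ℝⁿ` into `‖y‖ ^ (p + q + n) = ‖y‖ ^ γ`
times the integral for the unit vector `u = y / ‖y‖`. The latter is bounded uniformly in `u`:
near `0` the kernel is at most a multiple of `‖x‖ ^ q`, near `u` of `‖x - u‖ ^ p`, both locally
integrable as `p, q > -n`, and elsewhere of `(1 + ‖x‖) ^ (p + q)`, integrable as `p + q < -n`;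
by translation invariance the integral of this majorant does not depend on `u`. Finally the
integral over the quarter-space is at most the integral over `ℝⁿ`.
-/

open Module

section TwoPointKernel

variable {E : Type*} [NormedAddCommGroup E]

def twoPointKernel (p q : ℝ) (y x : E) : ℝ := ‖x - y‖ ^ p * ‖x‖ ^ q

def twoPointMajorant (p q : ℝ) (u x : E) : ℝ :=
  (ball (0 : E) 2⁻¹).indicator (fun z => (2⁻¹ : ℝ) ^ p * ‖z‖ ^ q) x +
    (ball (0 : E) 2⁻¹).indicator (fun z => (2⁻¹ : ℝ) ^ q * ‖z‖ ^ p) (x - u) +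
    ((1 + ‖x‖) / 5) ^ (p + q)

variable {p q : ℝ}

lemma twoPointKernel_nonneg (y x : E) : 0 ≤ twoPointKernel p q y x := by
  unfold twoPointKernel; positivity

lemma twoPointKernel_le_majorant (hp : p ≤ 0) (hq : q ≤ 0) {u : E} (hu : ‖u‖ = 1) (x : E) :
    twoPointKernel p q u x ≤ twoPointMajorant p q u x := by
  have h₁ : 0 ≤ (ball (0 : E) 2⁻¹).indicator (fun z => (2⁻¹ : ℝ) ^ p * ‖z‖ ^ q) x :=
    indicator_nonneg (fun _ _ => by positivity) _
  have h₂ : 0 ≤ (ball (0 : E) 2⁻¹).indicator (fun z => (2⁻¹ : ℝ) ^ q * ‖z‖ ^ p) (x - u) :=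
    indicator_nonneg (fun _ _ => by positivity) _
  have h₃ : 0 ≤ ((1 + ‖x‖) / 5) ^ (p + q) := by positivity
  have hx_le : ‖x‖ ≤ ‖x - u‖ + 1 := hu ▸ norm_le_norm_sub_add x u
  have hu_le : 1 ≤ ‖x - u‖ + ‖x‖ := hu ▸ norm_sub_rev x u ▸ norm_le_norm_sub_add u x
  unfold twoPointKernel twoPointMajorant
  rcases lt_or_ge ‖x‖ 2⁻¹ with hx | hx
  · rw [indicator_of_mem (mem_ball_zero_iff.2 hx)]
    have : ‖x - u‖ ^ p ≤ (2⁻¹ : ℝ) ^ p :=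
      Real.rpow_le_rpow_of_nonpos (by norm_num) (by linarith) hp
    nlinarith [Real.rpow_nonneg (norm_nonneg x) q]
  rcases lt_or_ge ‖x - u‖ 2⁻¹ with hxu | hxu
  · rw [indicator_of_mem (mem_ball_zero_iff.2 hxu)]
    have : ‖x‖ ^ q ≤ (2⁻¹ : ℝ) ^ q :=
      Real.rpow_le_rpow_of_nonpos (by norm_num) (by linarith) hq
    nlinarith [Real.rpow_nonneg (norm_nonneg (x - u)) p]
  -- now `‖x‖, ‖x - u‖ ≥ 1/2`, so both are at least `(1 + ‖x‖) / 5`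
  have hpos : 0 < (1 + ‖x‖) / 5 := by positivity
  have hxu' : ‖x - u‖ ^ p ≤ ((1 + ‖x‖) / 5) ^ p :=
    Real.rpow_le_rpow_of_nonpos hpos (by linarith) hp
  have hx' : ‖x‖ ^ q ≤ ((1 + ‖x‖) / 5) ^ q :=
    Real.rpow_le_rpow_of_nonpos hpos (by linarith) hq
  rw [Real.rpow_add hpos]
  nlinarith [mul_le_mul hxu' hx' (by positivity) (by positivity)]

variable [NormedSpace ℝ E]

lemma twoPointKernel_smul_smul {R : ℝ} (hR : 0 < R) (u z : E) :
    twoPointKernel p q (R • u) (R • z) = R ^ (p + q) * twoPointKernel p q u z := by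
  simp only [twoPointKernel, ← smul_sub, norm_smul, Real.norm_of_nonneg hR.le,
    Real.mul_rpow hR.le (norm_nonneg _), Real.rpow_add hR]
  ring

lemma twoPointKernel_eq_rpow_mul_inv_smul {R : ℝ} (hR : 0 < R) (y : E) :
    twoPointKernel p q y =
      fun x => R ^ (p + q) * twoPointKernel p q (R⁻¹ • y) (R⁻¹ • x) := by
  ext x
  rw [← twoPointKernel_smul_smul hR, smul_inv_smul₀ hR.ne', smul_inv_smul₀ hR.ne']

variable [MeasurableSpace E] [BorelSpace E] [FiniteDimensional ℝ E] (μ : Measure E)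
  [μ.IsAddHaarMeasure]

lemma integrable_indicator_ball_mul_rpow_norm (hd : 1 ≤ finrank ℝ E) {s : ℝ}
    (hs : -(finrank ℝ E : ℝ) < s) (c r : ℝ) :
    Integrable ((ball (0 : E) r).indicator fun z => c * ‖z‖ ^ s) μ := by
  refine (integrable_indicator_iff measurableSet_ball).2 (Integrable.const_mul ?_ c)
  refine integrableOn_ball_of_norm_le_rpow hd (C := 1) (α := -s) (by linarith)
    (ae_of_all _ fun z => ?_) (measurable_norm.pow_const s).aestronglyMeasurable
  rw [neg_neg, one_mul, Real.norm_of_nonneg (by positivity)]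

lemma integrable_one_add_norm_div_rpow {s : ℝ} (hs : s < -(finrank ℝ E : ℝ)) {a : ℝ}
    (ha : 0 ≤ a) : Integrable (fun x : E => ((1 + ‖x‖) / a) ^ s) μ := by
  have := (integrable_one_add_norm (μ := μ) (r := -s) (by linarith)).div_const (a ^ s)
  simp only [neg_neg] at this
  exact this.congr (ae_of_all _ fun x => (Real.div_rpow (by positivity) ha s).symm)

lemma integrable_twoPointMajorant (hp : -(finrank ℝ E : ℝ) < p) (hq : -(finrank ℝ E : ℝ) < q)
    (hpq : p + q < -(finrank ℝ E : ℝ)) (u : E) : Integrable (twoPointMajorant p q u) μ := by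
  have hd : 1 ≤ finrank ℝ E := Nat.cast_pos.1 (by linarith : (0 : ℝ) < finrank ℝ E)
  exact ((integrable_indicator_ball_mul_rpow_norm μ hd hq _ _).add
    ((integrable_indicator_ball_mul_rpow_norm μ hd hp _ _).comp_sub_right u)).add
    (integrable_one_add_norm_div_rpow μ hpq (by norm_num))

lemma integral_twoPointMajorant (hp : -(finrank ℝ E : ℝ) < p) (hq : -(finrank ℝ E : ℝ) < q)
    (hpq : p + q < -(finrank ℝ E : ℝ)) (u : E) :
    ∫ x, twoPointMajorant p q u x ∂μ = ∫ x, twoPointMajorant p q 0 x ∂μ := by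
  have hd : 1 ≤ finrank ℝ E := Nat.cast_pos.1 (by linarith : (0 : ℝ) < finrank ℝ E)
  set f₁ : E → ℝ := (ball 0 2⁻¹).indicator fun z => (2⁻¹ : ℝ) ^ p * ‖z‖ ^ q
  set f₂ : E → ℝ := (ball 0 2⁻¹).indicator fun z => (2⁻¹ : ℝ) ^ q * ‖z‖ ^ p
  set f₃ : E → ℝ := fun x => ((1 + ‖x‖) / 5) ^ (p + q)
  have h₁ : Integrable f₁ μ := integrable_indicator_ball_mul_rpow_norm μ hd hq _ _
  have h₂ : Integrable f₂ μ := integrable_indicator_ball_mul_rpow_norm μ hd hp _ _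
  have h₃ : Integrable f₃ μ := integrable_one_add_norm_div_rpow μ hpq (by norm_num)
  have key (v : E) :
      ∫ x, twoPointMajorant p q v x ∂μ = (∫ x, f₁ x ∂μ) + (∫ x, f₂ x ∂μ) + ∫ x, f₃ x ∂μ := by
    have h₁₂ : Integrable (fun x => f₁ x + f₂ (x - v)) μ := h₁.add (h₂.comp_sub_right v)
    rw [← integral_sub_right_eq_self f₂ v, ← integral_add h₁ (h₂.comp_sub_right v),
      ← integral_add h₁₂ h₃]
    rfl
  rw [key, key]

lemma integrable_twoPointKernel_of_norm_eq_one (hp : -(finrank ℝ E : ℝ) < p)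
    (hq : -(finrank ℝ E : ℝ) < q) (hpq : p + q < -(finrank ℝ E : ℝ)) (hp0 : p ≤ 0) (hq0 : q ≤ 0)
    {u : E} (hu : ‖u‖ = 1) : Integrable (twoPointKernel p q u) μ :=
  (integrable_twoPointMajorant μ hp hq hpq u).mono'
    (by unfold twoPointKernel; fun_prop : Measurable (twoPointKernel p q u)).aestronglyMeasurable
    (ae_of_all _ fun x => (Real.norm_of_nonneg (twoPointKernel_nonneg u x)).trans_le
      (twoPointKernel_le_majorant hp0 hq0 hu x))

lemma integral_twoPointKernel_le_of_norm_eq_one (hp : -(finrank ℝ E : ℝ) < p)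
    (hq : -(finrank ℝ E : ℝ) < q) (hpq : p + q < -(finrank ℝ E : ℝ)) (hp0 : p ≤ 0) (hq0 : q ≤ 0)
    {u : E} (hu : ‖u‖ = 1) :
    ∫ x, twoPointKernel p q u x ∂μ ≤ ∫ x, twoPointMajorant p q 0 x ∂μ :=
  (integral_mono (integrable_twoPointKernel_of_norm_eq_one μ hp hq hpq hp0 hq0 hu)
    (integrable_twoPointMajorant μ hp hq hpq u) (twoPointKernel_le_majorant hp0 hq0 hu)).trans_eq
    (integral_twoPointMajorant μ hp hq hpq u)

lemma integrable_twoPointKernel (hp : -(finrank ℝ E : ℝ) < p)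
    (hq : -(finrank ℝ E : ℝ) < q) (hpq : p + q < -(finrank ℝ E : ℝ)) (hp0 : p ≤ 0) (hq0 : q ≤ 0)
    {y : E} (hy : y ≠ 0) : Integrable (twoPointKernel p q y) μ := by
  have hR : 0 < ‖y‖ := norm_pos_iff.2 hy
  rw [twoPointKernel_eq_rpow_mul_inv_smul hR]
  refine Integrable.const_mul ?_ _
  exact (integrable_comp_smul_iff μ _ (inv_ne_zero hR.ne')).2
    (integrable_twoPointKernel_of_norm_eq_one μ hp hq hpq hp0 hq0 (norm_smul_inv_norm hy))

lemma integral_twoPointKernel_le (hp : -(finrank ℝ E : ℝ) < p)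
    (hq : -(finrank ℝ E : ℝ) < q) (hpq : p + q < -(finrank ℝ E : ℝ)) (hp0 : p ≤ 0) (hq0 : q ≤ 0)
    {y : E} (hy : y ≠ 0) :
    ∫ x, twoPointKernel p q y x ∂μ ≤
      (∫ x, twoPointMajorant p q 0 x ∂μ) * ‖y‖ ^ (p + q + finrank ℝ E) := by
  have hR : 0 < ‖y‖ := norm_pos_iff.2 hy
  have hu := integral_twoPointKernel_le_of_norm_eq_one μ hp hq hpq hp0 hq0
    (u := ‖y‖⁻¹ • y) (norm_smul_inv_norm hy)
  rw [twoPointKernel_eq_rpow_mul_inv_smul hR, integral_const_mul,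
    Measure.integral_comp_inv_smul μ (twoPointKernel p q (‖y‖⁻¹ • y)), smul_eq_mul,
    abs_of_pos (by positivity), ← Real.rpow_natCast, ← mul_assoc, ← Real.rpow_add hR, mul_comm]
  gcongr

end TwoPointKernel

theorem quarter_space_interior_kernel_estimate (n : ℕ) (hn : 3 ≤ n) (γ : ℝ)
    (hγ₁ : 2 - (n : ℝ) < γ) (hγ₂ : γ < 0) :
    ∃ C > 0, ∀ y : EuclideanSpace ℝ (Fin n), y ≠ 0 →
      IntegrableOn (fun x => ‖x - y‖ ^ ((2 : ℝ) - n) * ‖x‖ ^ (γ - 2))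
        (Qset (⟨0, by omega⟩ : Fin n) (⟨n - 1, by omega⟩ : Fin n)) volume ∧
      (∫ x in Qset (⟨0, by omega⟩ : Fin n) (⟨n - 1, by omega⟩ : Fin n),
          ‖x - y‖ ^ ((2 : ℝ) - n) * ‖x‖ ^ (γ - 2)) ≤ C * ‖y‖ ^ γ := by
  have hd : (finrank ℝ (EuclideanSpace ℝ (Fin n)) : ℝ) = n := by simp
  have hp : -(finrank ℝ (EuclideanSpace ℝ (Fin n)) : ℝ) < 2 - n := by linarith
  have hq : -(finrank ℝ (EuclideanSpace ℝ (Fin n)) : ℝ) < γ - 2 := by linarith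
  have hpq : (2 - n) + (γ - 2) < -(finrank ℝ (EuclideanSpace ℝ (Fin n)) : ℝ) := by linarith
  have hp0 : (2 : ℝ) - n ≤ 0 := by linarith
  have hq0 : γ - 2 ≤ 0 := by linarith
  set M := ∫ x, twoPointMajorant (2 - n) (γ - 2) (0 : EuclideanSpace ℝ (Fin n)) x
  refine ⟨max M 1, by positivity, fun y hy => ?_⟩
  have hint := integrable_twoPointKernel volume hp hq hpq hp0 hq0 hy
  refine ⟨hint.integrableOn, ?_⟩
  calc _ ≤ ∫ x, twoPointKernel (2 - n) (γ - 2) y x :=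
        setIntegral_le_integral hint (ae_of_all _ (twoPointKernel_nonneg y))
    _ ≤ M * ‖y‖ ^ ((2 - n) + (γ - 2) + finrank ℝ (EuclideanSpace ℝ (Fin n)) : ℝ) :=
        integral_twoPointKernel_le volume hp hq hpq hp0 hq0 hy
    _ = M * ‖y‖ ^ γ := by rw [hd]; ring_nf
    _ ≤ max M 1 * ‖y‖ ^ γ := by gcongr; exact le_max_left _ _
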